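/- The inference rules −→I, −→E₀, −→E₁, +←I, +←E₀, and +←E₁ are derivable in the fragment of BiND⇐_prop whose primitive rules are Non-contradiction, Reductio, +→I, +→E, −←I, and −←E: e.g., from +A₀ and −A₁ one can derive −(A₀→A₁) using only those primitives, and from −(A₀→A₁) one can derive +A₀ and also −A₁. -/

import Mathlib

set_option autoImplicit true
set_option relaxedAutoImplicit true

/-- Negation-free formulae with →, ← (but-not), ∧, ∨. -/
inductive Fm : Type
  | pv : ℕ → Fm
  | imp : Fm → Fm → Fm
  | bnot : Fm → Fm → Fm
  | and : Fm → Fm → Fm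
  | or : Fm → Fm → Fm
deriving DecidableEq

/-- Signed formulae: +A (acceptance) and −A (rejection). -/
inductive SF : Type
  | pl : Fm → SF
  | mi : Fm → SF
deriving DecidableEq

/-- Conjugation swaps polarities. -/
def SF.star : SF → SF
  | .pl A => .mi A
  | .mi A => .pl A

mutual
/-- The fragment of BiND⇐_prop whose primitive rules are Non-contradiction,
Reductio, +→I, +→E, −←I, and −←E. -/
inductive Drv : Set SF → SF → Prop
  | hyp {Γ a} : a ∈ Γ → Drv Γ a
  | reductio {Γ} (a : SF) : Absurd (insert a Γ) → Drv Γ a.star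
  | impIp {Γ A0 A1} : Drv (insert (.pl A0) Γ) (.pl A1) → Drv Γ (.pl (.imp A0 A1))
  | impEp {Γ A0 A1} : Drv Γ (.pl (.imp A0 A1)) → Drv Γ (.pl A0) → Drv Γ (.pl A1)
  | bnotIm {Γ A0 A1} : Drv (insert (.mi A1) Γ) (.mi A0) → Drv Γ (.mi (.bnot A0 A1))
  | bnotEm {Γ A0 A1} : Drv Γ (.mi (.bnot A0 A1)) → Drv Γ (.mi A1) → Drv Γ (.mi A0)

/-- `Absurd Γ` : ⊥ is derivable from Γ, via Non-contradiction. -/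
inductive Absurd : Set SF → Prop
  | nc {Γ a} : Drv Γ a → Drv Γ a.star → Absurd Γ
end

/-!
Each rule is derived by Reductio: assume the conjugate of its conclusion and clash it, via
Non-contradiction, with a premise. Where that clash needs an introduction rule whose premise is
not available (+→I for −→E₀, −←I for +←E₁), the discharged assumption contradicts the reductio
hypothesis, and the missing premise is obtained by ex falso, itself an instance of Reductio.
-/

@[simp]
theorem SF.star_star (a : SF) : a.star.star = a := by
  cases a <;> rfl

theorem Drv.mono {Γ : Set SF} {a : SF} (h : Drv Γ a) {Δ : Set SF} (hΓΔ : Γ ⊆ Δ) : Drv Δ a := by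
  induction h using Drv.rec (motive_2 := fun Γ _ => ∀ {Δ : Set SF}, Γ ⊆ Δ → Absurd Δ)
    generalizing Δ with
  | hyp ha => exact .hyp (hΓΔ ha)
  | reductio a _ ih => exact .reductio a (ih (Set.insert_subset_insert hΓΔ))
  | impIp _ ih => exact .impIp (ih (Set.insert_subset_insert hΓΔ))
  | impEp _ _ ih₁ ih₂ => exact .impEp (ih₁ hΓΔ) (ih₂ hΓΔ)
  | bnotIm _ ih => exact .bnotIm (ih (Set.insert_subset_insert hΓΔ))
  | bnotEm _ _ ih₁ ih₂ => exact .bnotEm (ih₁ hΓΔ) (ih₂ hΓΔ)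
  | nc _ _ ih₁ ih₂ => exact .nc (ih₁ ‹_›) (ih₂ ‹_›)

theorem Absurd.mono {Γ Δ : Set SF} (h : Absurd Γ) (hΓΔ : Γ ⊆ Δ) : Absurd Δ := by
  obtain ⟨h₁, h₂⟩ := h
  exact .nc (h₁.mono hΓΔ) (h₂.mono hΓΔ)

namespace Drv

variable {Γ : Set SF} {a b : SF} {A0 A1 : Fm}

theorem insert_self : Drv (insert a Γ) a :=
  .hyp (Set.mem_insert a Γ)

theorem insert_of_drv (h : Drv Γ a) : Drv (insert b Γ) a :=
  h.mono (Set.subset_insert b Γ)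

theorem of_absurd (h : Absurd Γ) (b : SF) : Drv Γ b := by
  simpa using Drv.reductio b.star (h.mono (Set.subset_insert _ Γ))

theorem star_of_contra (h : Drv (insert a Γ) b) (h' : Drv (insert a Γ) b.star) : Drv Γ a.star :=
  .reductio a (.nc h h')

theorem impIm (h₀ : Drv Γ (.pl A0)) (h₁ : Drv Γ (.mi A1)) : Drv Γ (.mi (.imp A0 A1)) :=
  star_of_contra (b := .pl A1) (.impEp insert_self (insert_of_drv h₀)) (insert_of_drv h₁)

theorem impEm₀ (h : Drv Γ (.mi (.imp A0 A1))) : Drv Γ (.pl A0) :=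
  star_of_contra (a := .mi A0) (b := .pl (.imp A0 A1))
    (.impIp (of_absurd (.nc (a := .pl A0) insert_self (insert_of_drv insert_self)) _))
    (insert_of_drv h)

theorem impEm₁ (h : Drv Γ (.mi (.imp A0 A1))) : Drv Γ (.mi A1) :=
  star_of_contra (a := .pl A1) (b := .pl (.imp A0 A1))
    (.impIp (insert_of_drv insert_self)) (insert_of_drv h)

theorem bnotIp (h₀ : Drv Γ (.pl A0)) (h₁ : Drv Γ (.mi A1)) : Drv Γ (.pl (.bnot A0 A1)) :=
  star_of_contra (b := .mi A0) (.bnotEm insert_self (insert_of_drv h₁)) (insert_of_drv h₀)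

theorem bnotEp₀ (h : Drv Γ (.pl (.bnot A0 A1))) : Drv Γ (.pl A0) :=
  star_of_contra (a := .mi A0) (b := .pl (.bnot A0 A1))
    (insert_of_drv h) (.bnotIm (insert_of_drv insert_self))

theorem bnotEp₁ (h : Drv Γ (.pl (.bnot A0 A1))) : Drv Γ (.mi A1) :=
  star_of_contra (a := .pl A1) (b := .pl (.bnot A0 A1)) (insert_of_drv h)
    (.bnotIm (of_absurd (.nc (a := .mi A1) insert_self (insert_of_drv insert_self)) _))

end Drv

/-- Proposition 4(2): the rules −→I, −→E₀, −→E₁, +←I, +←E₀, +←E₁ are derivable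
(admissible) in the fragment with primitives Non-contradiction, Reductio,
+→I, +→E, −←I, −←E. -/
theorem minus_imp_plus_bnot_rules_derivable :
    (∀ (Γ : Set SF) (A0 A1 : Fm),
      Drv Γ (.pl A0) → Drv Γ (.mi A1) → Drv Γ (.mi (.imp A0 A1))) ∧
    (∀ (Γ : Set SF) (A0 A1 : Fm), Drv Γ (.mi (.imp A0 A1)) → Drv Γ (.pl A0)) ∧
    (∀ (Γ : Set SF) (A0 A1 : Fm), Drv Γ (.mi (.imp A0 A1)) → Drv Γ (.mi A1)) ∧
    (∀ (Γ : Set SF) (A0 A1 : Fm),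
      Drv Γ (.pl A0) → Drv Γ (.mi A1) → Drv Γ (.pl (.bnot A0 A1))) ∧
    (∀ (Γ : Set SF) (A0 A1 : Fm), Drv Γ (.pl (.bnot A0 A1)) → Drv Γ (.pl A0)) ∧
    (∀ (Γ : Set SF) (A0 A1 : Fm), Drv Γ (.pl (.bnot A0 A1)) → Drv Γ (.mi A1)) :=
  ⟨fun _ _ _ => Drv.impIm, fun _ _ _ => Drv.impEm₀, fun _ _ _ => Drv.impEm₁,
    fun _ _ _ => Drv.bnotIp, fun _ _ _ => Drv.bnotEp₀, fun _ _ _ => Drv.bnotEp₁⟩
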